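/- arXiv:1009.1427 — 3 statements merged into one kernel-verified Lean document; each statement's English description precedes it below -/
import Mathlib

section
/- Let A be an artin algebra, let 0 → X → Y → Z → 0 be a short exact sequence of finitely generated A-modules, and let M be a finitely generated A-module. If Hom̲_A(M,X) = 0 and Hom̲_A(M,Z) = 0, then Hom̲_A(M,Y) = 0. -/
open CategoryTheory Limits

universe u

namespace SMS

variable {A : Type u} [Ring A]

/-- A morphism of `A`-modules factors through a projective module. -/
def FTP {X Y : ModuleCat.{u} A} (f : X ⟶ Y) : Prop :=
  ∃ (P : ModuleCat.{u} A) (g : X ⟶ P) (h : P ⟶ Y), Projective P ∧ f = g ≫ h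

/-- The stable Hom-group `Hom̲_A(X,Y)` vanishes. -/
def StablyZero (X Y : ModuleCat.{u} A) : Prop := ∀ f : X ⟶ Y, FTP f

/-- The stable endomorphism ring `Hom̲_A(X,X)` is a division ring: it is nonzero and every
nonzero element (i.e. every endomorphism not factoring through a projective) is invertible
modulo maps factoring through projectives. -/
def StableEndoDivisionRing (X : ModuleCat.{u} A) : Prop :=
  ¬ FTP (𝟙 X) ∧
    ∀ f : X ⟶ X, ¬ FTP f →
      ∃ g : X ⟶ X, FTP (f ≫ g - 𝟙 X) ∧ FTP (g ≫ f - 𝟙 X)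

/-- `X` is a direct summand of `Y`. -/
def IsSummand (X Y : ModuleCat.{u} A) : Prop := ∃ (i : X ⟶ Y) (r : Y ⟶ X), i ≫ r = 𝟙 X

/-- An indecomposable module: nonzero, and in any direct sum decomposition one factor vanishes. -/
def Indec (X : ModuleCat.{u} A) : Prop :=
  ¬ IsZero X ∧ ∀ Y Z : ModuleCat.{u} A, Nonempty (X ≅ Y ⊞ Z) → IsZero Y ∨ IsZero Z

/-- `X` is an object of `mod_P A`: finitely generated and without nonzero projective
direct summands. -/
def InModP (X : ModuleCat.{u} A) : Prop :=
  Module.Finite A X ∧ ∀ P : ModuleCat.{u} A, Projective P → IsSummand P X → IsZero P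

/-- `0 → X --f--> E --g--> Z → 0` is an almost split (Auslander-Reiten) sequence. -/
structure IsARSeq {X E Z : ModuleCat.{u} A} (f : X ⟶ E) (g : E ⟶ Z) : Prop where
  mono : Function.Injective f
  epi : Function.Surjective g
  exact : Function.Exact f g
  not_split : ∀ r : E ⟶ X, f ≫ r ≠ 𝟙 X
  left_almost : ∀ (U : ModuleCat.{u} A) (u : X ⟶ U),
    (∀ r : U ⟶ X, u ≫ r ≠ 𝟙 X) → ∃ v : E ⟶ U, f ≫ v = u
  right_almost : ∀ (U : ModuleCat.{u} A) (u : U ⟶ Z),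
    (∀ s : Z ⟶ U, s ≫ u ≠ 𝟙 Z) → ∃ v : U ⟶ E, v ≫ g = u

/-- A node: a simple module, neither projective nor injective, such that the middle term of
the almost split sequence starting at it is projective. -/
def IsNode (X : ModuleCat.{u} A) : Prop :=
  IsSimpleModule A X ∧ ¬ Projective X ∧ ¬ Injective X ∧
    ∃ (E Z : ModuleCat.{u} A) (f : X ⟶ E) (g : E ⟶ Z), Projective E ∧ IsARSeq f g

variable (A) in
/-- The indecomposable objects of the subcategory `e(A)`: simple projective modules, nodes,
and indecomposable non-simple non-injective projective modules. -/
def EClass : Set (ModuleCat.{u} A) :=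
  {X | (IsSimpleModule A X ∧ Projective X) ∨ IsNode X ∨
    (Module.Finite A X ∧ Indec X ∧ ¬ IsSimpleModule A X ∧ ¬ Injective X ∧ Projective X)}

variable (A) in
/-- The indecomposable objects of the subcategory `e'(A)`: simple projective modules and nodes. -/
def E'Class : Set (ModuleCat.{u} A) :=
  {X | (IsSimpleModule A X ∧ Projective X) ∨ IsNode X}

/-- `X` is (isomorphic to) a finite direct sum of objects of `𝒞`. -/
inductive IsFinSum (𝒞 : Set (ModuleCat.{u} A)) : ModuleCat.{u} A → Prop
  | zero {X} : IsZero X → IsFinSum 𝒞 X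
  | mem {X} : X ∈ 𝒞 → IsFinSum 𝒞 X
  | biprod {X Y Z} : IsFinSum 𝒞 X → IsFinSum 𝒞 Y → Nonempty (Z ≅ X ⊞ Y) → IsFinSum 𝒞 Z

/-- `⟨𝒞⟩`: direct summands of finite direct sums of objects of `𝒞`. -/
def AddClos (𝒞 : Set (ModuleCat.{u} A)) : Set (ModuleCat.{u} A) :=
  {X | ∃ Y, IsFinSum 𝒞 Y ∧ IsSummand X Y}

variable (A) in
/-- `⟨𝒞⟩ * ⟨𝒟⟩`: indecomposable modules `Y` admitting a short exact sequence
`0 → X → Y ⊕ P → Z → 0` with `Z ∈ ⟨𝒟⟩`, `X ∈ ⟨𝒞 ∪ e(A)⟩` and `P` projective. -/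
def Star (𝒞 𝒟 : Set (ModuleCat.{u} A)) : Set (ModuleCat.{u} A) :=
  {Y | Indec Y ∧ ∃ (X Z P : ModuleCat.{u} A) (f : X ⟶ Y ⊞ P) (g : (Y ⊞ P : ModuleCat.{u} A) ⟶ Z),
    X ∈ AddClos (𝒞 ∪ EClass A) ∧ Z ∈ AddClos 𝒟 ∧ Projective P ∧
    Function.Injective f ∧ Function.Surjective g ∧ Function.Exact f g}

variable (A) in
/-- The classes `⟨𝒮⟩ₙ` (here `Gen A 𝒮 n = ⟨𝒮⟩_{n+1}`):
`⟨𝒮⟩₁ = ⟨𝒮⟩` and `⟨𝒮⟩ₙ = ⟨⟨𝒮⟩ₙ₋₁ * ⟨𝒮⟩⟩`. -/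
def Gen (𝒮 : Set (ModuleCat.{u} A)) : ℕ → Set (ModuleCat.{u} A)
  | 0 => AddClos 𝒮
  | (n + 1) => AddClos (Star A (Gen 𝒮 n) 𝒮)

variable (A) in
/-- A simple-minded system over `A`. -/
structure IsSMS (𝒮 : Set (ModuleCat.{u} A)) : Prop where
  modP : ∀ X ∈ 𝒮, InModP X
  orth_of_ne : ∀ X ∈ 𝒮, ∀ Y ∈ 𝒮, X ≠ Y → StablyZero X Y
  endo_div : ∀ X ∈ 𝒮, StableEndoDivisionRing X
  gen : ∀ X : ModuleCat.{u} A, Module.Finite A X → Indec X → ¬ Projective X →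
    ∃ n, X ∈ Gen A 𝒮 n

namespace FTP

variable {X Y Z : ModuleCat.{u} A}

lemma comp {f : X ⟶ Y} (hf : FTP f) (h : Y ⟶ Z) : FTP (f ≫ h) := by
  obtain ⟨P, a, b, hP, rfl⟩ := hf
  exact ⟨P, a, b ≫ h, hP, (Category.assoc a b h).symm⟩

lemma add {f f' : X ⟶ Y} (hf : FTP f) (hf' : FTP f') : FTP (f + f') := by
  obtain ⟨P, a, b, hP, rfl⟩ := hf
  obtain ⟨P', a', b', hP', rfl⟩ := hf'
  exact ⟨P ⊞ P', biprod.lift a a', biprod.desc b b', inferInstance, by simp⟩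

lemma exists_sub_comp_eq_zero {u : X ⟶ Y} {g : Y ⟶ Z} [Epi g] (hug : FTP (u ≫ g)) :
    ∃ v : X ⟶ Y, FTP v ∧ (u - v) ≫ g = 0 := by
  obtain ⟨P, a, b, hP, hab⟩ := hug
  refine ⟨a ≫ Projective.factorThru b g, ⟨P, a, _, hP, rfl⟩, ?_⟩
  rw [Preadditive.sub_comp, Category.assoc, Projective.factorThru_comp, hab, sub_self]

end FTP

end SMS

lemma ModuleCat.exists_comp_eq_of_exact {A : Type u} [Ring A] {M X Y Z : ModuleCat.{u} A}
    {f : X ⟶ Y} {g : Y ⟶ Z} (hf : Function.Injective f) (hfg : Function.Exact f g)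
    {w : M ⟶ Y} (hw : w ≫ g = 0) : ∃ c : M ⟶ X, c ≫ f = w := by
  let S := ShortComplex.mk f g <| ModuleCat.hom_ext <| LinearMap.ext hfg.apply_apply_eq_zero
  have hS : S.Exact := ModuleCat.shortComplex_exact S hfg
  have : Mono S.f := (ModuleCat.mono_iff_injective f).mpr hf
  exact ⟨hS.lift w hw, hS.lift_f w hw⟩

open SMS in
theorem stmt2_general
    (A : Type u) [Ring A]
    (X Y Z M : ModuleCat.{u} A)
    (f : X ⟶ Y) (g : Y ⟶ Z)
    (hf : Function.Injective f) (hg : Function.Surjective g) (hfg : Function.Exact f g)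
    (h₁ : StablyZero M X) (h₂ : StablyZero M Z) :
    StablyZero M Y := by
  intro u
  have : Epi g := (ModuleCat.epi_iff_surjective g).mpr hg
  obtain ⟨v, hv, hvg⟩ := (h₂ (u ≫ g)).exists_sub_comp_eq_zero
  obtain ⟨c, hc⟩ := ModuleCat.exists_comp_eq_of_exact hf hfg hvg
  simpa [hc] using ((h₁ c).comp f).add hv

open SMS in
/-- Let `A` be an artin algebra, `0 → X → Y → Z → 0` a short exact sequence of
finitely generated `A`-modules and `M` a finitely generated `A`-module. If `Hom̲_A(M,X) = 0` and
`Hom̲_A(M,Z) = 0`, then `Hom̲_A(M,Y) = 0`. -/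
theorem stmt2 (R : Type u) [CommRing R] [IsArtinianRing R]
    (A : Type u) [Ring A] [Algebra R A] [Module.Finite R A]
    (X Y Z M : ModuleCat.{u} A)
    (hX : Module.Finite A X) (hY : Module.Finite A Y) (hZ : Module.Finite A Z)
    (hM : Module.Finite A M)
    (f : X ⟶ Y) (g : Y ⟶ Z)
    (hf : Function.Injective f) (hg : Function.Surjective g) (hfg : Function.Exact f g)
    (h₁ : StablyZero M X) (h₂ : StablyZero M Z) :
    StablyZero M Y :=
  stmt2_general A X Y Z M f g hf hg hfg h₁ h₂
end

section
/- Let A be a (non-semisimple) artin algebra and let S be a simple-minded system over A. Then S contains, up to isomorphism, every simple A-module that is non-projective and injective. -/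
/-
A simple injective module `X` that is a direct summand of the middle term of a short exact
sequence `0 → K → M → Z → 0` is a summand of `K` or of `Z`: the composite `X → M → Z` is either
zero, so that `X → M` factors through `K`, or a monomorphism, which splits. Following the
generation `X ∈ ⟨𝒮⟩ₙ` downwards, `X` becomes a summand of a member of `𝒮` or of `e(A)`. The
latter is impossible: members of `e(A)` are projective or non-injective simples. A
non-projective summand `X` of `S ∈ 𝒮` is all of `S`: the idempotent `e` of `S` cutting out `X`
does not factor through a projective, so it is invertible in the stable endomorphism ring;
then `1 - e` factors through a projective, hence cuts out a projective summand of `S`, which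
vanishes since `S ∈ mod_P A`.
-/

open CategoryTheory Limits

universe u

namespace SMS

variable {A : Type u} [Ring A]

lemma FTP.precomp {X Y Z : ModuleCat.{u} A} (f : X ⟶ Y) {g : Y ⟶ Z} (hg : FTP g) :
    FTP (f ≫ g) := by
  obtain ⟨P, a, b, hP, rfl⟩ := hg
  exact ⟨P, f ≫ a, b, hP, (Category.assoc _ _ _).symm⟩

lemma FTP.postcomp {X Y Z : ModuleCat.{u} A} {f : X ⟶ Y} (hf : FTP f) (g : Y ⟶ Z) :
    FTP (f ≫ g) := by
  obtain ⟨P, a, b, hP, rfl⟩ := hf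
  exact ⟨P, a, b ≫ g, hP, Category.assoc _ _ _⟩

lemma IsSummand.refl (X : ModuleCat.{u} A) : IsSummand X X :=
  ⟨𝟙 X, 𝟙 X, Category.id_comp _⟩

lemma IsSummand.trans {X Y Z : ModuleCat.{u} A} (hXY : IsSummand X Y) (hYZ : IsSummand Y Z) :
    IsSummand X Z := by
  obtain ⟨i, r, hir⟩ := hXY
  obtain ⟨j, s, hjs⟩ := hYZ
  exact ⟨i ≫ j, s ≫ r, by simp [reassoc_of% hjs, hir]⟩

lemma IsSummand.of_iso {X Y Z : ModuleCat.{u} A} (h : IsSummand X Y) (e : Y ≅ Z) :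
    IsSummand X Z :=
  h.trans ⟨e.hom, e.inv, e.hom_inv_id⟩

lemma IsSummand.biprod_left {X Y : ModuleCat.{u} A} (h : IsSummand X Y) (P : ModuleCat.{u} A) :
    IsSummand X (Y ⊞ P) :=
  h.trans ⟨biprod.inl, biprod.fst, biprod.inl_fst⟩

lemma IsSummand.projective {X Y : ModuleCat.{u} A} (h : IsSummand X Y) [Projective Y] :
    Projective X := by
  obtain ⟨i, r, hir⟩ := h
  exact Retract.projective ⟨i, r, hir⟩

lemma projective_of_ftp_id {X : ModuleCat.{u} A} (h : FTP (𝟙 X)) : Projective X := by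
  obtain ⟨P, a, b, hP, hab⟩ := h
  exact IsSummand.projective ⟨a, b, hab.symm⟩

lemma projective_of_retract_of_ftp {X S : ModuleCat.{u} A} {i : X ⟶ S} {r : S ⟶ X}
    (hir : i ≫ r = 𝟙 X) (hftp : FTP (r ≫ i)) : Projective X := by
  have hid : i ≫ (r ≫ i) ≫ r = 𝟙 X := by simp [hir]
  exact projective_of_ftp_id (hid ▸ (hftp.postcomp r).precomp i)

lemma InModP.eq_zero_of_idem_of_ftp {S : ModuleCat.{u} A} (hS : InModP S) {p : S ⟶ S}
    (hp : p ≫ p = p) (hftp : FTP p) : p = 0 := by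
  obtain ⟨Y, i, r, hir, hri⟩ := IsIdempotentComplete.idempotents_split S p hp
  have hY : IsZero Y :=
    hS.2 Y (projective_of_retract_of_ftp hir (hri ▸ hftp)) ⟨i, r, hir⟩
  rw [← hri, hY.eq_of_src i 0, comp_zero]

lemma InModP.eq_id_of_idem_of_not_ftp {S : ModuleCat.{u} A} (hS : InModP S)
    (hdiv : StableEndoDivisionRing S) {e : S ⟶ S} (he : e ≫ e = e) (hnot : ¬ FTP e) :
    e = 𝟙 S := by
  obtain ⟨g, hg, -⟩ := hdiv.2 e hnot
  have hcomp : (e - 𝟙 S) ≫ (e ≫ g - 𝟙 S) = 𝟙 S - e := by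
    simp only [Preadditive.sub_comp, Preadditive.comp_sub, reassoc_of% he, Category.id_comp,
      Category.comp_id]
    abel
  have h0 :=
    hS.eq_zero_of_idem_of_ftp (Idempotents.idem_of_id_sub_idem e he) (hcomp ▸ hg.precomp _)
  exact (sub_eq_zero.mp h0).symm

lemma InModP.nonempty_iso_of_isSummand {X S : ModuleCat.{u} A} (hS : InModP S)
    (hdiv : StableEndoDivisionRing S) (hX : ¬ Projective X) (h : IsSummand X S) :
    Nonempty (X ≅ S) := by
  obtain ⟨i, r, hir⟩ := h
  have hidem : (r ≫ i) ≫ (r ≫ i) = r ≫ i := by simp [reassoc_of% hir]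
  have hnot : ¬ FTP (r ≫ i) := fun hftp => hX (projective_of_retract_of_ftp hir hftp)
  exact ⟨⟨i, r, hir, hS.eq_id_of_idem_of_not_ftp hdiv hidem hnot⟩⟩

section Simple

variable {X : ModuleCat.{u} A} [Simple X]

lemma indec_of_simple : Indec X :=
  ⟨(indecomposable_of_simple X).1, fun Y Z ⟨e⟩ => (indecomposable_of_simple X).2 Y Z e⟩

lemma IsSummand.nonempty_iso_of_simple {C : ModuleCat.{u} A} [Simple C] (h : IsSummand X C) :
    Nonempty (X ≅ C) := by
  obtain ⟨i, r, hir⟩ := h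
  have hi : i ≠ 0 := fun hi => id_nonzero X (by rw [← hir, hi, zero_comp])
  have := isIso_of_hom_simple hi
  exact ⟨asIso i⟩

lemma IsSummand.of_biprod {Y₁ Y₂ : ModuleCat.{u} A} (h : IsSummand X (Y₁ ⊞ Y₂)) :
    IsSummand X Y₁ ∨ IsSummand X Y₂ := by
  obtain ⟨i, r, hir⟩ := h
  have htotal : (i ≫ biprod.fst) ≫ (biprod.inl ≫ r) + (i ≫ biprod.snd) ≫ (biprod.inr ≫ r) =
      𝟙 X :=
    calc _ = i ≫ (biprod.fst ≫ biprod.inl + biprod.snd ≫ biprod.inr) ≫ r := by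
          simp only [Preadditive.add_comp, Preadditive.comp_add, Category.assoc]
      _ = 𝟙 X := by rw [biprod.total, Category.id_comp, hir]
  by_cases h₁ : (i ≫ biprod.fst) ≫ (biprod.inl ≫ r) = 0
  · exact Or.inr ⟨_, _, by rwa [h₁, zero_add] at htotal⟩
  · have := isIso_of_hom_simple h₁
    exact Or.inl ⟨_, _ ≫ inv ((i ≫ biprod.fst) ≫ (biprod.inl ≫ r)), by
      rw [← Category.assoc, IsIso.hom_inv_id]⟩

lemma exists_mem_isSummand_of_isFinSum {𝒞 : Set (ModuleCat.{u} A)} {Y : ModuleCat.{u} A}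
    (hY : IsFinSum 𝒞 Y) (h : IsSummand X Y) : ∃ C ∈ 𝒞, IsSummand X C := by
  induction hY with
  | zero hz =>
    obtain ⟨i, r, hir⟩ := h
    exact (id_nonzero X (by rw [← hir, hz.eq_of_tgt i 0, zero_comp])).elim
  | mem hC => exact ⟨_, hC, h⟩
  | biprod _ _ hiso ih₁ ih₂ =>
    obtain ⟨e⟩ := hiso
    exact (h.of_iso e).of_biprod.elim ih₁ ih₂

lemma exists_mem_isSummand_of_mem_addClos {𝒞 : Set (ModuleCat.{u} A)} {W : ModuleCat.{u} A}
    (hW : W ∈ AddClos 𝒞) (h : IsSummand X W) : ∃ C ∈ 𝒞, IsSummand X C := by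
  obtain ⟨Y, hY, hWY⟩ := hW
  exact exists_mem_isSummand_of_isFinSum hY (h.trans hWY)

variable [Injective X]

lemma not_isSummand_of_mem_eClass (hX : ¬ Projective X) {C : ModuleCat.{u} A}
    (hC : C ∈ EClass A) : ¬ IsSummand X C := by
  intro h
  rcases hC with ⟨-, hproj⟩ | ⟨hCsimple, -, hCninj, -⟩ | ⟨-, -, -, -, hproj⟩
  · exact hX h.projective
  · have : Simple C := (simple_iff_isSimpleModule' C).mpr hCsimple
    obtain ⟨e⟩ := h.nonempty_iso_of_simple
    exact hCninj (Injective.of_iso e inferInstance)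
  · exact hX h.projective

lemma IsSummand.of_exact {K M Z : ModuleCat.{u} A} {f : K ⟶ M} {g : M ⟶ Z}
    (hf : Function.Injective f) (hfg : Function.Exact f g) (h : IsSummand X M) :
    IsSummand X K ∨ IsSummand X Z := by
  obtain ⟨i, r, hir⟩ := h
  by_cases hig : i ≫ g = 0
  · let S : ShortComplex (ModuleCat.{u} A) :=
      ShortComplex.mk f g (ModuleCat.hom_ext hfg.linearMap_comp_eq_zero)
    have hS : S.Exact := (ShortComplex.ShortExact.moduleCat_exact_iff_function_exact S).mpr hfg
    have : Mono S.f := (ModuleCat.mono_iff_injective f).mpr hf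
    exact Or.inl ⟨hS.lift i hig, f ≫ r, by rw [← Category.assoc, hS.lift_f, hir]⟩
  · have := mono_of_nonzero_from_simple hig
    exact Or.inr ⟨i ≫ g, Injective.factorThru (𝟙 X) (i ≫ g), Injective.comp_factorThru _ _⟩

lemma IsSummand.of_mem_star {𝒞 𝒟 : Set (ModuleCat.{u} A)} {Y : ModuleCat.{u} A}
    (hY : Y ∈ Star A 𝒞 𝒟) (h : IsSummand X Y) :
    (∃ C ∈ 𝒞 ∪ EClass A, IsSummand X C) ∨ ∃ D ∈ 𝒟, IsSummand X D := by
  obtain ⟨-, K, Z, P, f, g, hK, hZ, -, hf, -, hfg⟩ := hY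
  exact ((h.biprod_left P).of_exact hf hfg).imp (exists_mem_isSummand_of_mem_addClos hK)
    (exists_mem_isSummand_of_mem_addClos hZ)

lemma exists_iso_mem_of_isSummand_of_mem_gen {𝒮 : Set (ModuleCat.{u} A)} (h𝒮 : IsSMS A 𝒮)
    (hX : ¬ Projective X) (n : ℕ) {W : ModuleCat.{u} A} (hW : W ∈ Gen A 𝒮 n)
    (h : IsSummand X W) : ∃ S ∈ 𝒮, Nonempty (X ≅ S) := by
  have of_mem : ∀ S ∈ 𝒮, IsSummand X S → ∃ S ∈ 𝒮, Nonempty (X ≅ S) := fun S hS hXS =>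
    ⟨S, hS, (h𝒮.modP S hS).nonempty_iso_of_isSummand (h𝒮.endo_div S hS) hX hXS⟩
  induction n generalizing W with
  | zero =>
    obtain ⟨S, hS, hXS⟩ := exists_mem_isSummand_of_mem_addClos hW h
    exact of_mem S hS hXS
  | succ n ih =>
    obtain ⟨Y, hY, hXY⟩ := exists_mem_isSummand_of_mem_addClos hW h
    rcases hXY.of_mem_star hY with ⟨C, hC | hC, hXC⟩ | ⟨S, hS, hXS⟩
    · exact ih hC hXC
    · exact (not_isSummand_of_mem_eClass hX hC hXC).elim
    · exact of_mem S hS hXS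

end Simple

end SMS

open SMS in
theorem stmt3_general
    (A : Type u) [Ring A]
    (𝒮 : Set (ModuleCat.{u} A)) (h𝒮 : IsSMS A 𝒮)
    (X : ModuleCat.{u} A) (hfin : Module.Finite A X) (hsimple : IsSimpleModule A X)
    (hnp : ¬ Projective X) (hinj : Injective X) :
    ∃ Y ∈ 𝒮, Nonempty (X ≅ Y) := by
  have : Simple X := (simple_iff_isSimpleModule' X).mpr hsimple
  obtain ⟨n, hn⟩ := h𝒮.gen X hfin indec_of_simple hnp
  exact exists_iso_mem_of_isSummand_of_mem_gen h𝒮 hnp n hn (IsSummand.refl X)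

open SMS in
/-- Let `A` be a (non-semisimple) artin algebra and let `𝒮` be a simple-minded
system over `A`. Then `𝒮` contains, up to isomorphism, every simple `A`-module that is
non-projective and injective. -/
theorem stmt3 (R : Type u) [CommRing R] [IsArtinianRing R]
    (A : Type u) [Ring A] [Algebra R A] [Module.Finite R A]
    (hA : ¬ IsSemisimpleRing A)
    (𝒮 : Set (ModuleCat.{u} A)) (h𝒮 : IsSMS A 𝒮)
    (X : ModuleCat.{u} A) (hfin : Module.Finite A X) (hsimple : IsSimpleModule A X)
    (hnp : ¬ Projective X) (hinj : Injective X) :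
    ∃ Y ∈ 𝒮, Nonempty (X ≅ Y) :=
  stmt3_general A 𝒮 h𝒮 X hfin hsimple hnp hinj
end

section
/- Let A be a self-injective artin algebra, M an indecomposable non-projective A-module, and X an indecomposable A-module. If there is a nonzero morphism f̲: X → M in the stable category mod̲ A, then there is a morphism h̲: τ⁻¹Ω(M) → X in mod̲ A such that the composition f̲ ∘ h̲ is nonzero in mod̲ A. -/
open CategoryTheory Limits

universe u

/-!
Here `K = Ω(M)` and `T = τ⁻¹Ω(M)`. Pull the presentation `0 → K → P → M → 0` back along `f` to
an extension `0 → K → Q → X → 0`. For a morphism of extensions which is the identity on `K` and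
lands in `0 → K → P → M → 0` with `P` projective, the source splits exactly when the map on the
right-hand terms factors through a projective. Hence `K → Q` is not split mono, so it factors
through the almost split sequence `0 → K → Z → T → 0`, inducing `h : T → X`; and if `h ≫ f`
factored through a projective, the almost split sequence would split.
-/

namespace SMS

universe v

variable {A : Type u} [Ring A]

section Exact

variable {K E T W : ModuleCat.{v} A} {f : K ⟶ E} {g : E ⟶ T}

lemma comp_eq_zero_of_exact (hfg : Function.Exact f g) : f ≫ g = 0 :=
  ModuleCat.hom_ext hfg.linearMap_comp_eq_zero

lemma exists_desc_of_exact (hfg : Function.Exact f g) (hg : Function.Surjective g)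
    (k : E ⟶ W) (hk : f ≫ k = 0) : ∃ h : T ⟶ W, g ≫ h = k := by
  let S := ShortComplex.mk f g (comp_eq_zero_of_exact hfg)
  have hS : S.Exact := (ShortComplex.ShortExact.moduleCat_exact_iff_function_exact S).2 hfg
  have : Epi S.g := (ModuleCat.epi_iff_surjective g).2 hg
  exact ⟨hS.desc k hk, hS.g_desc k hk⟩

lemma exists_lift_of_exact (hfg : Function.Exact f g) (hf : Function.Injective f)
    (k : W ⟶ E) (hk : k ≫ g = 0) : ∃ h : W ⟶ K, h ≫ f = k := by
  let S := ShortComplex.mk f g (comp_eq_zero_of_exact hfg)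
  have hS : S.Exact := (ShortComplex.ShortExact.moduleCat_exact_iff_function_exact S).2 hfg
  have : Mono S.f := (ModuleCat.mono_iff_injective f).2 hf
  exact ⟨hS.lift k hk, hS.lift_f k hk⟩

end Exact

section MorphismOfExtensions

variable {K P M E X : ModuleCat.{v} A} {i : K ⟶ P} {p : P ⟶ M} {j : K ⟶ E} {q : E ⟶ X}
  {β : E ⟶ P} {γ : X ⟶ M}

lemma exists_lift_of_retraction (hjq : Function.Exact j q) (hq : Function.Surjective q)
    (hip : i ≫ p = 0) (hβ : j ≫ β = i) (hγ : q ≫ γ = β ≫ p) {r : E ⟶ K} (hr : j ≫ r = 𝟙 K) :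
    ∃ t : X ⟶ P, t ≫ p = γ := by
  obtain ⟨t, ht⟩ := exists_desc_of_exact hjq hq (β - r ≫ i)
    (by rw [Preadditive.comp_sub, hβ, ← Category.assoc, hr, Category.id_comp, sub_self])
  have : Epi q := (ModuleCat.epi_iff_surjective q).2 hq
  refine ⟨t, (cancel_epi q).1 ?_⟩
  rw [← Category.assoc, ht, Preadditive.sub_comp, Category.assoc, hip, Limits.comp_zero,
    sub_zero, hγ]

lemma exists_retraction_of_lift (hip : Function.Exact i p) (hi : Function.Injective i)
    (hjq : j ≫ q = 0) (hβ : j ≫ β = i) (hγ : q ≫ γ = β ≫ p) {t : X ⟶ P} (ht : t ≫ p = γ) :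
    ∃ r : E ⟶ K, j ≫ r = 𝟙 K := by
  obtain ⟨r, hr⟩ := exists_lift_of_exact hip hi (β - q ≫ t)
    (by rw [Preadditive.sub_comp, Category.assoc, ht, hγ, sub_self])
  have : Mono i := (ModuleCat.mono_iff_injective i).2 hi
  refine ⟨r, (cancel_mono i).1 ?_⟩
  rw [Category.assoc, hr, Preadditive.comp_sub, hβ, ← Category.assoc, hjq, Limits.zero_comp,
    sub_zero, Category.id_comp]

end MorphismOfExtensions

lemma exists_pullback_extension {K P M X : ModuleCat.{v} A} {i : K ⟶ P} {p : P ⟶ M}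
    (hip : Function.Exact i p) (hp : Function.Surjective p) (f : X ⟶ M) :
    ∃ (Q : ModuleCat.{v} A) (j : K ⟶ Q) (q : Q ⟶ X) (π : Q ⟶ P),
      Function.Exact j q ∧ Function.Surjective q ∧ j ≫ π = i ∧ q ≫ f = π ≫ p := by
  let Q := LinearMap.ker (f.hom ∘ₗ LinearMap.fst A X P - p.hom ∘ₗ LinearMap.snd A X P)
  have mem_Q (x : X) (y : P) : (x, y) ∈ Q ↔ f x = p y := by
    simp [Q, sub_eq_zero]
  let j : K →ₗ[A] Q := LinearMap.codRestrict Q (LinearMap.inr A X P ∘ₗ i.hom)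
    fun k => (mem_Q 0 (i k)).2 (by rw [map_zero, hip.apply_apply_eq_zero])
  refine ⟨ModuleCat.of A Q, ModuleCat.ofHom j, ModuleCat.ofHom (LinearMap.fst A X P ∘ₗ Q.subtype),
    ModuleCat.ofHom (LinearMap.snd A X P ∘ₗ Q.subtype), ?_, ?_, rfl, ?_⟩
  · rintro ⟨⟨x, y⟩, hxy⟩
    refine ⟨fun hx => ?_, fun ⟨k, hk⟩ => by rw [← hk]; rfl⟩
    obtain rfl : x = 0 := hx
    obtain ⟨k, rfl⟩ := (hip y).1 (by rw [← (mem_Q 0 y).1 hxy, map_zero])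
    exact ⟨k, rfl⟩
  · intro x
    obtain ⟨y, hy⟩ := hp (f x)
    exact ⟨⟨(x, y), (mem_Q x y).2 hy.symm⟩, rfl⟩
  · ext ⟨⟨x, y⟩, hxy⟩
    exact (mem_Q x y).1 hxy

lemma FTP.exists_lift {X M P : ModuleCat.{u} A} {γ : X ⟶ M} (hγ : FTP γ) (p : P ⟶ M)
    (hp : Function.Surjective p) : ∃ t : X ⟶ P, t ≫ p = γ := by
  obtain ⟨P', a, b, hP', rfl⟩ := hγ
  have : Epi p := (ModuleCat.epi_iff_surjective p).2 hp
  exact ⟨a ≫ Projective.factorThru b p, by rw [Category.assoc, Projective.factorThru_comp]⟩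

lemma exists_retraction_iff_FTP {K P M E X : ModuleCat.{u} A} {i : K ⟶ P} {p : P ⟶ M}
    {j : K ⟶ E} {q : E ⟶ X} {β : E ⟶ P} {γ : X ⟶ M} (hP : Projective P)
    (hip : Function.Exact i p) (hi : Function.Injective i) (hp : Function.Surjective p)
    (hjq : Function.Exact j q) (hq : Function.Surjective q) (hβ : j ≫ β = i)
    (hγ : q ≫ γ = β ≫ p) :
    (∃ r : E ⟶ K, j ≫ r = 𝟙 K) ↔ FTP γ := by
  constructor
  · rintro ⟨r, hr⟩
    obtain ⟨t, rfl⟩ := exists_lift_of_retraction hjq hq (comp_eq_zero_of_exact hip) hβ hγ hr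
    exact ⟨P, t, p, hP, rfl⟩
  · intro hγP
    obtain ⟨t, ht⟩ := hγP.exists_lift p hp
    exact exists_retraction_of_lift hip hi (comp_eq_zero_of_exact hjq) hβ hγ ht

end SMS

open SMS in
theorem stmt16_general
    (A : Type u) [Ring A]
    (M X : ModuleCat.{u} A)
    (f : X ⟶ M) (hf : ¬ FTP f)
    (K P : ModuleCat.{u} A) (p : P ⟶ M) (hP : Projective P) (hpsurj : Function.Surjective p)
    (i : K ⟶ P) (hi : Function.Injective i) (hip : Function.Exact i p)
    (Z T : ModuleCat.{u} A) (u : K ⟶ Z) (v : Z ⟶ T) (hasa : IsARSeq u v) :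
    ∃ h : T ⟶ X, ¬ FTP (h ≫ f) := by
  obtain ⟨Q, j, q, π, hjq, hq, hjπ, hqf⟩ := exists_pullback_extension hip hpsurj f
  have hj : ∀ r : Q ⟶ K, j ≫ r ≠ 𝟙 K := fun r hr =>
    hf ((exists_retraction_iff_FTP hP hip hi hpsurj hjq hq hjπ hqf).1 ⟨r, hr⟩)
  obtain ⟨w, hw⟩ := hasa.left_almost Q j hj
  obtain ⟨h, hh⟩ := exists_desc_of_exact hasa.exact hasa.epi (w ≫ q)
    (by rw [← Category.assoc, hw, comp_eq_zero_of_exact hjq])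
  refine ⟨h, fun hhf => ?_⟩
  obtain ⟨r, hr⟩ := (exists_retraction_iff_FTP hP hip hi hpsurj hasa.exact hasa.epi
    (β := w ≫ π) (by rw [← Category.assoc, hw, hjπ])
    (by rw [← Category.assoc, hh, Category.assoc, hqf, Category.assoc])).2 hhf
  exact hasa.not_split r hr

open SMS in
/-- (Pogorzaly) Let `A` be a self-injective artin algebra, `M` an
indecomposable non-projective `A`-module, `X` an indecomposable `A`-module, and `f : X ⟶ M`
a morphism which is nonzero in the stable category. Let `0 → K → P → M → 0` present the
syzygy `K = Ω(M)` (with `P → M` a projective cover) and let `0 → K → Z → T → 0` be the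
almost split sequence starting at `K` (so `T = τ⁻¹Ω(M)`). Then there is `h : T ⟶ X` with
`f̲ ∘ h̲ ≠ 0` in the stable category. -/
theorem stmt16 (R : Type u) [CommRing R] [IsArtinianRing R]
    (A : Type u) [Ring A] [Algebra R A] [Module.Finite R A]
    (hselfinj : Module.Injective A A)
    (M X : ModuleCat.{u} A) (hM : Module.Finite A M) (hX : Module.Finite A X)
    (hMind : Indec M) (hMnp : ¬ Projective M) (hXind : Indec X)
    (f : X ⟶ M) (hf : ¬ FTP f)
    (K P : ModuleCat.{u} A) (p : P ⟶ M) (hP : Projective P) (hpsurj : Function.Surjective p)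
    (hsuperfluous : ∀ N : Submodule A P, N ⊔ LinearMap.ker p.hom = ⊤ → N = ⊤)
    (i : K ⟶ P) (hi : Function.Injective i) (hip : Function.Exact i p)
    (Z T : ModuleCat.{u} A) (u : K ⟶ Z) (v : Z ⟶ T) (hasa : IsARSeq u v) :
    ∃ h : T ⟶ X, ¬ FTP (h ≫ f) :=
  stmt16_general A M X f hf K P p hP hpsurj i hi hip Z T u v hasa
end
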